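/- Let k be a field, n ≥ 1, R = k[x_1,…,x_n], and let I ⊆ R be a proper homogeneous 𝔪-primary ideal with dim_k Soc(R/I) = 1 (a homogeneous Gorenstein ideal of codimension n); let s be the socle degree of R/I. Let m ≥ 1 be an integer and f a nonzero homogeneous polynomial such that (x_1^m,…,x_n^m) : (f) = I and every exponent vector α in the support of f satisfies α_i ≤ m−1 for all i (i.e. no nonzero term of f lies in (x_1^m,…,x_n^m)). Then deg f = n(m−1) − s, and f is uniquely determined up to a nonzero scalar: any other nonzero homogeneous polynomial g with (x_1^m,…,x_n^m) : (g) = I whose support also lies in the box {α : α_i ≤ m−1 for all i} equals c·f for some nonzero c ∈ k. -/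

import Mathlib

open MvPolynomial

/-- The maximal graded ideal `𝔪 = (x_1, …, x_n)` of `k[x_1,…,x_n]`. -/
noncomputable def mIdealN (k : Type*) [Field k] (n : ℕ) : Ideal (MvPolynomial (Fin n) k) :=
  Ideal.span (Set.range (X : Fin n → MvPolynomial (Fin n) k))

/-- `dim_k Soc(R/I)`, the total dimension of the socle `(I : 𝔪)/I` of `R/I`. -/
noncomputable def socDimN {k : Type*} [Field k] {n : ℕ}
    (I : Ideal (MvPolynomial (Fin n) k)) : ℕ :=
  Module.finrank k
    ↥(Submodule.map (Ideal.Quotient.mkₐ k I).toLinearMap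
      ((Submodule.colon I (mIdealN k n)).restrictScalars k))

/-! Write `J = (x_1^m, …, x_n^m)` and `τ = (m-1, …, m-1)`, so that `x^τ` spans the socle of
`R/J`. A form of degree `n(m-1)` lies in `J` iff its coefficient at `x^τ` vanishes, and every form
of larger degree lies in `J`. For a form `f` of degree `e` supported in the box `β ≤ τ`, this
turns membership of a form `h` of degree `n(m-1) - e` in `J : f` into the linear condition
`coeff_τ (h f) = 0`, and `coeff_τ (x^(τ-β) f) = coeff_β f`.

Taking `h = x^(τ-α)` with `α` in the support of `f` shows `n(m-1) - e ≤ s`, while any form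
`h ∉ J : f` of degree `s` has `h f ∉ J`, so `s + e ≤ n(m-1)`. If also `J : g = J : f`, the form
`coeff_α f · x^(τ-β) - coeff_β f · x^(τ-α)` lies in `J : f = J : g`, which forces
`coeff_α f · coeff_β g = coeff_β f · coeff_α g`: the coefficient vectors are proportional. -/

namespace MvPolynomial

section PurePowerIdeal

variable {R σ : Type*} [CommSemiring R] {m : ℕ} {p : MvPolynomial σ R}

noncomputable def purePowerIdeal (R σ : Type*) [CommSemiring R] (m : ℕ) :
    Ideal (MvPolynomial σ R) :=
  Ideal.span (Set.range fun i : σ => (X i : MvPolynomial σ R) ^ m)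

noncomputable def topExp (σ : Type*) [Finite σ] (m : ℕ) : σ →₀ ℕ :=
  Finsupp.equivFunOnFinite.symm fun _ => m - 1

@[simp]
theorem topExp_apply [Finite σ] (i : σ) : topExp σ m i = m - 1 := rfl

theorem le_topExp_iff [Finite σ] {α : σ →₀ ℕ} : α ≤ topExp σ m ↔ ∀ i, α i ≤ m - 1 := by
  simp [Finsupp.le_def]

theorem degree_topExp [Fintype σ] : (topExp σ m).degree = Fintype.card σ * (m - 1) := by
  simp [Finsupp.degree_eq_sum]

theorem degree_topExp_sub_add [Fintype σ] {α : σ →₀ ℕ} (hα : α ≤ topExp σ m) :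
    (topExp σ m - α).degree + α.degree = Fintype.card σ * (m - 1) := by
  rw [← map_add, tsub_add_cancel_of_le hα, degree_topExp]

theorem eq_topExp_of_le_of_degree_eq [Fintype σ] {α : σ →₀ ℕ} (hα : α ≤ topExp σ m)
    (hdeg : α.degree = Fintype.card σ * (m - 1)) : α = topExp σ m := by
  have := degree_topExp_sub_add hα
  rw [hdeg, Nat.add_eq_right, Finsupp.degree_eq_zero_iff, tsub_eq_zero_iff_le] at this
  exact le_antisymm hα this

theorem IsHomogeneous.degree_eq_of_mem_support {d : ℕ} (hp : p.IsHomogeneous d)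
    {α : σ →₀ ℕ} (hα : α ∈ p.support) : α.degree = d :=
  not_not.1 fun h => mem_support_iff.1 hα (hp.coeff_eq_zero h)

theorem mem_purePowerIdeal_iff : p ∈ purePowerIdeal R σ m ↔ ∀ α ∈ p.support, ∃ i, m ≤ α i := by
  have : purePowerIdeal R σ m =
      Ideal.span ((fun s => monomial s (1 : R)) '' Set.range fun i => Finsupp.single i m) := by
    simp [purePowerIdeal, ← Set.range_comp, Function.comp_def, X_pow_eq_monomial]
  simp [this, mem_ideal_span_monomial_image, Finsupp.single_le_iff]

theorem exists_le_topExp_of_notMem_purePowerIdeal [Finite σ] (hm : 1 ≤ m)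
    (hp : p ∉ purePowerIdeal R σ m) : ∃ α ∈ p.support, α ≤ topExp σ m := by
  simp only [mem_purePowerIdeal_iff, not_forall, not_exists, not_le] at hp
  obtain ⟨α, hα, hlt⟩ := hp
  exact ⟨α, hα, le_topExp_iff.2 fun i => by have := hlt i; omega⟩

theorem coeff_eq_zero_of_mem_purePowerIdeal [Finite σ] (hm : 1 ≤ m)
    (hp : p ∈ purePowerIdeal R σ m) {α : σ →₀ ℕ} (hα : α ≤ topExp σ m) : coeff α p = 0 := by
  by_contra h
  obtain ⟨i, hi⟩ := mem_purePowerIdeal_iff.1 hp α (mem_support_iff.2 h)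
  have := le_topExp_iff.1 hα i
  omega

theorem degree_le_of_notMem_purePowerIdeal [Fintype σ] (hm : 1 ≤ m) {d : ℕ}
    (hp : p.IsHomogeneous d) (hpJ : p ∉ purePowerIdeal R σ m) : d ≤ Fintype.card σ * (m - 1) := by
  obtain ⟨α, hα, hατ⟩ := exists_le_topExp_of_notMem_purePowerIdeal hm hpJ
  rw [← hp.degree_eq_of_mem_support hα, ← degree_topExp]
  exact Finsupp.degree_mono hατ

theorem mem_purePowerIdeal_iff_coeff_topExp_eq_zero [Fintype σ] (hm : 1 ≤ m)
    (hp : p.IsHomogeneous (Fintype.card σ * (m - 1))) :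
    p ∈ purePowerIdeal R σ m ↔ coeff (topExp σ m) p = 0 := by
  refine ⟨fun hpJ => coeff_eq_zero_of_mem_purePowerIdeal hm hpJ le_rfl, fun h => ?_⟩
  by_contra hpJ
  obtain ⟨α, hα, hατ⟩ := exists_le_topExp_of_notMem_purePowerIdeal hm hpJ
  rw [eq_topExp_of_le_of_degree_eq hατ (hp.degree_eq_of_mem_support hα)] at hα
  exact mem_support_iff.1 hα h

theorem coeff_topExp_monomial_mul [Finite σ] {α : σ →₀ ℕ} (hα : α ≤ topExp σ m) (c : R)
    (p : MvPolynomial σ R) :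
    coeff (topExp σ m) (monomial (topExp σ m - α) c * p) = c * coeff α p := by
  rw [coeff_monomial_mul', if_pos tsub_le_self, tsub_tsub_cancel_of_le hα]

end PurePowerIdeal

section Colon

variable {R σ : Type*} [CommSemiring R] [Fintype σ] {m d e : ℕ} {f h : MvPolynomial σ R}

theorem mem_colon_purePowerIdeal_iff (hm : 1 ≤ m) (hh : h.IsHomogeneous d)
    (hf : f.IsHomogeneous e) (hde : d + e = Fintype.card σ * (m - 1)) :
    h ∈ (purePowerIdeal R σ m).colon (Ideal.span {f}) ↔ coeff (topExp σ m) (h * f) = 0 := by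
  rw [Ideal.mem_colon_span_singleton,
    mem_purePowerIdeal_iff_coeff_topExp_eq_zero hm (hde ▸ hh.mul hf)]

theorem add_degree_eq_of_isGreatest_colon (hm : 1 ≤ m) {s : ℕ} (hf0 : f ≠ 0)
    (hf : f.IsHomogeneous e) (hbox : ∀ α ∈ f.support, ∀ i, α i ≤ m - 1)
    (hs : IsGreatest {t | ∃ h : MvPolynomial σ R,
      h.IsHomogeneous t ∧ h ∉ (purePowerIdeal R σ m).colon (Ideal.span {f})} s) :
    s + e = Fintype.card σ * (m - 1) := by
  obtain ⟨α, hα⟩ := support_nonempty.2 hf0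
  have hατ : α ≤ topExp σ m := le_topExp_iff.2 (hbox α hα)
  have hdeg := degree_topExp_sub_add hατ
  rw [hf.degree_eq_of_mem_support hα] at hdeg
  have hlower : (topExp σ m - α).degree ≤ s := by
    refine hs.2 ⟨monomial (topExp σ m - α) 1, isHomogeneous_monomial _ rfl, ?_⟩
    rw [mem_colon_purePowerIdeal_iff hm (isHomogeneous_monomial _ rfl) hf hdeg,
      coeff_topExp_monomial_mul hατ, one_mul]
    exact mem_support_iff.1 hα
  obtain ⟨h, hh, hhf⟩ := hs.1
  rw [Ideal.mem_colon_span_singleton] at hhf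
  have hupper := degree_le_of_notMem_purePowerIdeal hm (hh.mul hf) hhf
  omega

end Colon

section Proportional

variable {σ : Type*} [Fintype σ] {m e : ℕ}

theorem coeff_mul_coeff_eq_of_colon_eq {R : Type*} [CommRing R] (hm : 1 ≤ m)
    {f g : MvPolynomial σ R} (hf : f.IsHomogeneous e) (hg : g.IsHomogeneous e)
    (hfg : (purePowerIdeal R σ m).colon (Ideal.span {g}) =
      (purePowerIdeal R σ m).colon (Ideal.span {f}))
    {α β : σ →₀ ℕ} (hα : α ≤ topExp σ m) (hβ : β ≤ topExp σ m)
    (hαe : α.degree = e) (hβe : β.degree = e) :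
    coeff α f * coeff β g = coeff β f * coeff α g := by
  have hαd := degree_topExp_sub_add hα
  have hβd := degree_topExp_sub_add hβ
  rw [hαe] at hαd
  rw [hβe] at hβd
  set h := monomial (topExp σ m - β) (coeff α f) - monomial (topExp σ m - α) (coeff β f)
  have hh : h.IsHomogeneous (topExp σ m - β).degree :=
    (isHomogeneous_monomial _ rfl).sub (isHomogeneous_monomial _ (by omega))
  have hcoeff (p : MvPolynomial σ R) :
      coeff (topExp σ m) (h * p) = coeff α f * coeff β p - coeff β f * coeff α p := by
    rw [sub_mul, coeff_sub, coeff_topExp_monomial_mul hβ, coeff_topExp_monomial_mul hα]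
  have hhf : h ∈ (purePowerIdeal R σ m).colon (Ideal.span {f}) :=
    (mem_colon_purePowerIdeal_iff hm hh hf hβd).2 (by rw [hcoeff, mul_comm, sub_self])
  rwa [← hfg, mem_colon_purePowerIdeal_iff hm hh hg hβd, hcoeff, sub_eq_zero] at hhf

theorem exists_eq_smul_of_colon_eq {k : Type*} [Field k] (hm : 1 ≤ m)
    {f g : MvPolynomial σ k} (hf0 : f ≠ 0) (hg0 : g ≠ 0)
    (hf : f.IsHomogeneous e) (hg : g.IsHomogeneous e)
    (hfbox : ∀ α ∈ f.support, ∀ i, α i ≤ m - 1) (hgbox : ∀ α ∈ g.support, ∀ i, α i ≤ m - 1)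
    (hfg : (purePowerIdeal k σ m).colon (Ideal.span {g}) =
      (purePowerIdeal k σ m).colon (Ideal.span {f})) :
    ∃ c : k, c ≠ 0 ∧ g = c • f := by
  obtain ⟨α, hα⟩ := support_nonempty.2 hf0
  have hcoeff (β : σ →₀ ℕ) : coeff α f * coeff β g = coeff β f * coeff α g := by
    by_cases hβ : β ≤ topExp σ m ∧ β.degree = e
    · exact coeff_mul_coeff_eq_of_colon_eq hm hf hg hfg (le_topExp_iff.2 (hfbox α hα)) hβ.1
        (hf.degree_eq_of_mem_support hα) hβ.2
    · have hout (p : MvPolynomial σ k) (hp : p.IsHomogeneous e)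
          (hbox : ∀ γ ∈ p.support, ∀ i, γ i ≤ m - 1) : coeff β p = 0 :=
        notMem_support_iff.1 fun hβp =>
          hβ ⟨le_topExp_iff.2 (hbox β hβp), hp.degree_eq_of_mem_support hβp⟩
      rw [hout f hf hfbox, hout g hg hgbox, mul_zero, zero_mul]
  have hgf : g = (coeff α g / coeff α f) • f := by
    ext β
    rw [coeff_smul, smul_eq_mul, div_mul_eq_mul_div, eq_div_iff (mem_support_iff.1 hα),
      mul_comm, hcoeff β, mul_comm]
  exact ⟨_, fun hc => hg0 (by rw [hgf, hc, zero_smul]), hgf⟩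

end Proportional

end MvPolynomial

theorem stmt12_general {k : Type*} [Field k] (n : ℕ)
    (I : Ideal (MvPolynomial (Fin n) k))
    (s : ℕ)
    (hs : IsGreatest {t : ℕ | ∃ h : MvPolynomial (Fin n) k, h.IsHomogeneous t ∧ h ∉ I} s)
    (m : ℕ) (hm : 1 ≤ m)
    (f : MvPolynomial (Fin n) k) (hf0 : f ≠ 0) (e : ℕ) (hfhom : f.IsHomogeneous e)
    (hcolon : Submodule.colon
        (Ideal.span (Set.range fun i : Fin n => (X i : MvPolynomial (Fin n) k) ^ m))
        (Ideal.span {f}) = I)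
    (hbox : ∀ α ∈ f.support, ∀ i, α i ≤ m - 1) :
    e = n * (m - 1) - s
    ∧ ∀ (g : MvPolynomial (Fin n) k) (e' : ℕ), g ≠ 0 → g.IsHomogeneous e' →
        Submodule.colon
            (Ideal.span (Set.range fun i : Fin n => (X i : MvPolynomial (Fin n) k) ^ m))
            (Ideal.span {g}) = I →
        (∀ α ∈ g.support, ∀ i, α i ≤ m - 1) →
        ∃ c : k, c ≠ 0 ∧ g = c • f := by
  change (purePowerIdeal k (Fin n) m).colon (Ideal.span {f}) = I at hcolon
  subst hcolon
  have hfdeg := add_degree_eq_of_isGreatest_colon hm hf0 hfhom hbox hs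
  rw [Fintype.card_fin] at hfdeg
  refine ⟨by omega, fun g e' hg0 hghom hgcolon hgbox => ?_⟩
  change (purePowerIdeal k (Fin n) m).colon (Ideal.span {g}) = _ at hgcolon
  have hgdeg := add_degree_eq_of_isGreatest_colon hm hg0 hghom hgbox (hgcolon ▸ hs)
  rw [Fintype.card_fin] at hgdeg
  obtain rfl : e' = e := by omega
  exact exists_eq_smul_of_colon_eq hm hf0 hg0 hfhom hghom hbox hgbox hgcolon

/-- Let `I ⊆ k[x_1,…,x_n]` be a proper homogeneous `𝔪`-primary Gorenstein ideal with socle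
degree `s`, and suppose `(x_1^m,…,x_n^m) : (f) = I` for a nonzero form `f` no term of which
lies in `(x_1^m,…,x_n^m)` (all exponents `≤ m−1`). Then `deg f = n(m−1) − s`, and `f` is
unique up to a nonzero scalar among such directrix forms. -/
theorem stmt12 {k : Type*} [Field k] (n : ℕ) (hn : 1 ≤ n)
    (I : Ideal (MvPolynomial (Fin n) k))
    (hproper : I ≠ ⊤)
    (hprim : ∃ N : ℕ, 1 ≤ N ∧ (mIdealN k n) ^ N ≤ I)
    (hsoc : socDimN I = 1)
    (s : ℕ)
    (hs : IsGreatest {t : ℕ | ∃ h : MvPolynomial (Fin n) k, h.IsHomogeneous t ∧ h ∉ I} s)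
    (m : ℕ) (hm : 1 ≤ m)
    (f : MvPolynomial (Fin n) k) (hf0 : f ≠ 0) (e : ℕ) (hfhom : f.IsHomogeneous e)
    (hcolon : Submodule.colon
        (Ideal.span (Set.range fun i : Fin n => (X i : MvPolynomial (Fin n) k) ^ m))
        (Ideal.span {f}) = I)
    (hbox : ∀ α ∈ f.support, ∀ i, α i ≤ m - 1) :
    e = n * (m - 1) - s
    ∧ ∀ (g : MvPolynomial (Fin n) k) (e' : ℕ), g ≠ 0 → g.IsHomogeneous e' →
        Submodule.colon
            (Ideal.span (Set.range fun i : Fin n => (X i : MvPolynomial (Fin n) k) ^ m))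
            (Ideal.span {g}) = I →
        (∀ α ∈ g.support, ∀ i, α i ≤ m - 1) →
        ∃ c : k, c ≠ 0 ∧ g = c • f :=
  stmt12_general n I s hs m hm f hf0 e hfhom hcolon hbox
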